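/- Let μ > 0, σ ≥ 0, and let A be any randomized pricing mechanism (probability measure on [0,∞)). Then the worst case over distributions with variance at most σ² equals the worst case over distributions with variance exactly σ²: sup over F with mean μ and variance ≤ σ² of OPT(F)/REV(A;F) equals sup over F with mean μ and variance = σ² of OPT(F)/REV(A;F). Consequently, inf_A sup_{F ∈ 𝔽_{μ,σ}} OPT(F)/REV(A;F) = inf_A sup_{F ∈ 𝔽^=_{μ,σ}} OPT(F)/REV(A;F). -/

import Mathlib

open MeasureTheory

/-- Revenue of posting price `p` against valuation distribution `F`:
`REV(p;F) = p · P(X ≥ p)`. -/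
noncomputable def rev (F : Measure ℝ) (p : ℝ) : ℝ :=
  p * (F (Set.Ici p)).toReal

/-- Optimal revenue `OPT(F) = sup_{p ≥ 0} p · P(X ≥ p)`. -/
noncomputable def opt (F : Measure ℝ) : ℝ :=
  ⨆ p ∈ Set.Ici (0 : ℝ), rev F p

/-- Revenue of a randomized pricing mechanism `A` (a measure over prices):
`REV(A;F) = E_{p∼A}[REV(p;F)]`. -/
noncomputable def mrev (A F : Measure ℝ) : ℝ :=
  ∫ p, rev F p ∂A

/-- `F` is a `(μ,σ)`-distributed distribution: a probability measure on `[0,∞)`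
with mean `m` and variance at most `s²`. -/
structure MeanVarLe (F : Measure ℝ) (m s : ℝ) : Prop where
  prob : IsProbabilityMeasure F
  supp : F (Set.Iio 0) = 0
  int_mean : Integrable (fun x => x) F
  int_sq : Integrable (fun x => x ^ 2) F
  mean : ∫ x, x ∂F = m
  var_le : ∫ x, (x - m) ^ 2 ∂F ≤ s ^ 2

/-- A randomized pricing mechanism: a probability measure over prices in `[0,∞)`. -/
def IsPriceMech (A : Measure ℝ) : Prop :=
  IsProbabilityMeasure A ∧ A (Set.Iio 0) = 0

/-- `F` is a probability measure on `[0,∞)` with mean `m` and variance exactly `s²`. -/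
structure MeanVarEq (F : Measure ℝ) (m s : ℝ) : Prop where
  prob : IsProbabilityMeasure F
  supp : F (Set.Iio 0) = 0
  int_mean : Integrable (fun x => x) F
  int_sq : Integrable (fun x => x ^ 2) F
  mean : ∫ x, x ∂F = m
  var_eq : ∫ x, (x - m) ^ 2 ∂F = s ^ 2

/-!
Mix a distribution `F` of mean `μ` and variance `v ≤ σ²` with weight `ε` of a two-point
distribution on `{0, a}` of mean `μ`; for a suitable `a ≥ μ` the mixture has mean `μ` and
variance exactly `σ²`. Posted-price revenues are affine in the distribution and bounded by the
mean, so the mixture keeps a fraction `1 - ε` of `OPT(F)` while `REV(A; ·)` grows by at most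
`ε μ`. As `ε → 0` the ratios of the mixtures approach `OPT(F)/REV(A;F)`, also when
`REV(A;F) = 0`.
-/

open Filter Set Topology
open scoped ENNReal

lemma MeanVarEq.toMeanVarLe {F : Measure ℝ} {m s : ℝ} (h : MeanVarEq F m s) :
    MeanVarLe F m s :=
  ⟨h.prob, h.supp, h.int_mean, h.int_sq, h.mean, h.var_eq.le⟩

lemma MeanVarLe.integrable_sub_sq {F : Measure ℝ} {m s : ℝ} (h : MeanVarLe F m s) (c : ℝ) :
    Integrable (fun x => (x - c) ^ 2) F := by
  have := h.prob
  refine ((h.int_sq.sub (h.int_mean.const_mul (2 * c))).add (integrable_const (c ^ 2))).congr ?_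
  exact Eventually.of_forall fun x => by simp only [Pi.add_apply, Pi.sub_apply]; ring

section Revenue

variable {F : Measure ℝ}

@[simp]
lemma rev_zero (F : Measure ℝ) : rev F 0 = 0 := by
  simp [rev]

lemma rev_nonneg (F : Measure ℝ) {p : ℝ} (hp : 0 ≤ p) : 0 ≤ rev F p :=
  mul_nonneg hp ENNReal.toReal_nonneg

lemma measurable_rev (F : Measure ℝ) [IsFiniteMeasure F] : Measurable (rev F) := by
  have h : Antitone fun p : ℝ => (F (Ici p)).toReal := fun p q hpq =>
    ENNReal.toReal_mono (measure_ne_top F _) (measure_mono (Ici_subset_Ici.mpr hpq))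
  exact measurable_id.mul h.measurable

lemma ae_nonneg_of_measure_Iio_eq_zero (h : F (Iio 0) = 0) : ∀ᵐ x ∂F, 0 ≤ x := by
  rw [ae_iff]
  simp only [not_le]
  exact h

lemma rev_le_integral (hF : F (Iio 0) = 0) (hint : Integrable (fun x => x) F) (p : ℝ) :
    rev F p ≤ ∫ x, x ∂F :=
  mul_meas_ge_le_integral_of_nonneg (ae_nonneg_of_measure_Iio_eq_zero hF) hint p

lemma MeanVarLe.rev_le {m s : ℝ} (hF : MeanVarLe F m s) (p : ℝ) : rev F p ≤ m :=
  hF.mean ▸ rev_le_integral hF.supp hF.int_mean p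

lemma opt_le {x : ℝ} (hx : 0 ≤ x) (h : ∀ p, 0 ≤ p → rev F p ≤ x) : opt F ≤ x :=
  Real.iSup_le (fun p => Real.iSup_le (h p) hx) hx

lemma rev_le_opt {m : ℝ} (hb : ∀ p, rev F p ≤ m) {p : ℝ} (hp : 0 ≤ p) : rev F p ≤ opt F :=
  le_ciSup₂ (f := fun p (_ : p ∈ Ici (0 : ℝ)) => rev F p)
    ⟨m, by simpa [upperBounds] using fun q _ => hb q⟩ p hp

lemma opt_nonneg {m : ℝ} (hb : ∀ p, rev F p ≤ m) : 0 ≤ opt F := by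
  simpa using rev_le_opt hb le_rfl

lemma integrable_rev {A : Measure ℝ} (hA : IsPriceMech A) [IsFiniteMeasure F] {m : ℝ}
    (hb : ∀ p, rev F p ≤ m) : Integrable (rev F) A := by
  have := hA.1
  refine ⟨(measurable_rev F).aestronglyMeasurable, HasFiniteIntegral.of_bounded (C := m) ?_⟩
  filter_upwards [ae_nonneg_of_measure_Iio_eq_zero hA.2] with p hp
  rw [Real.norm_eq_abs, abs_le]
  exact ⟨by linarith [rev_nonneg F hp, hb p], hb p⟩

lemma mrev_le {A : Measure ℝ} (hA : IsPriceMech A) [IsFiniteMeasure F] {m : ℝ}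
    (hb : ∀ p, rev F p ≤ m) : mrev A F ≤ m := by
  have := hA.1
  simpa [mrev] using integral_mono (integrable_rev hA hb) (integrable_const m) hb

end Revenue

noncomputable def mix (ε : ℝ) (F D : Measure ℝ) : Measure ℝ :=
  ENNReal.ofReal (1 - ε) • F + ENNReal.ofReal ε • D

section Mix

variable {ε : ℝ} {F D : Measure ℝ}

lemma mix_apply (s : Set ℝ) :
    mix ε F D s = ENNReal.ofReal (1 - ε) * F s + ENNReal.ofReal ε * D s := by
  simp [mix]

lemma isProbabilityMeasure_mix (hε0 : 0 ≤ ε) (hε1 : ε ≤ 1) [IsProbabilityMeasure F]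
    [IsProbabilityMeasure D] : IsProbabilityMeasure (mix ε F D) := by
  constructor
  rw [mix_apply, measure_univ, measure_univ, mul_one, mul_one,
    ← ENNReal.ofReal_add (by linarith) hε0, sub_add_cancel, ENNReal.ofReal_one]

protected lemma MeasureTheory.Integrable.mix {f : ℝ → ℝ} (hF : Integrable f F) (hD : Integrable f D) :
    Integrable f (mix ε F D) :=
  (hF.smul_measure ENNReal.ofReal_ne_top).add_measure (hD.smul_measure ENNReal.ofReal_ne_top)

lemma integral_mix (hε0 : 0 ≤ ε) (hε1 : ε ≤ 1) {f : ℝ → ℝ} (hF : Integrable f F)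
    (hD : Integrable f D) :
    ∫ x, f x ∂(mix ε F D) = (1 - ε) * ∫ x, f x ∂F + ε * ∫ x, f x ∂D := by
  rw [mix, integral_add_measure (hF.smul_measure ENNReal.ofReal_ne_top)
    (hD.smul_measure ENNReal.ofReal_ne_top), integral_smul_measure, integral_smul_measure,
    ENNReal.toReal_ofReal (by linarith), ENNReal.toReal_ofReal hε0, smul_eq_mul, smul_eq_mul]

lemma rev_mix (hε0 : 0 ≤ ε) (hε1 : ε ≤ 1) [IsFiniteMeasure F] [IsFiniteMeasure D] (p : ℝ) :
    rev (mix ε F D) p = (1 - ε) * rev F p + ε * rev D p := by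
  rw [rev, rev, rev, mix_apply, ENNReal.toReal_add (by finiteness) (by finiteness),
    ENNReal.toReal_mul, ENNReal.toReal_mul, ENNReal.toReal_ofReal (by linarith),
    ENNReal.toReal_ofReal hε0]
  ring

lemma meanVarEq_mix (hε0 : 0 ≤ ε) (hε1 : ε ≤ 1) {m s t r : ℝ} (hF : MeanVarLe F m s)
    (hD : MeanVarLe D m t)
    (hvar : (1 - ε) * ∫ x, (x - m) ^ 2 ∂F + ε * ∫ x, (x - m) ^ 2 ∂D = r ^ 2) :
    MeanVarEq (mix ε F D) m r := by
  have := hF.prob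
  have := hD.prob
  refine ⟨isProbabilityMeasure_mix hε0 hε1, ?_, hF.int_mean.mix hD.int_mean,
    hF.int_sq.mix hD.int_sq, ?_, ?_⟩
  · simp [mix_apply, hF.supp, hD.supp]
  · rw [integral_mix hε0 hε1 hF.int_mean hD.int_mean, hF.mean, hD.mean]
    ring
  · rwa [integral_mix hε0 hε1 (hF.integrable_sub_sq m) (hD.integrable_sub_sq m)]

lemma opt_mix_ge (hε0 : 0 ≤ ε) (hε1 : ε < 1) [IsFiniteMeasure F] [IsFiniteMeasure D] {m : ℝ}
    (hF : ∀ p, rev F p ≤ m) (hD : ∀ p, rev D p ≤ m) :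
    (1 - ε) * opt F ≤ opt (mix ε F D) := by
  have hmix := rev_mix (F := F) (D := D) hε0 hε1.le
  have hb : ∀ p, rev (mix ε F D) p ≤ m := fun p => by
    rw [hmix]
    nlinarith [hF p, hD p]
  have h1ε : 0 < 1 - ε := by linarith
  rw [mul_comm, ← le_div_iff₀ h1ε]
  refine opt_le (div_nonneg (opt_nonneg hb) h1ε.le) fun p hp => ?_
  rw [le_div_iff₀ h1ε]
  calc rev F p * (1 - ε) ≤ rev (mix ε F D) p := by
        rw [hmix]
        nlinarith [rev_nonneg D hp]
    _ ≤ opt (mix ε F D) := rev_le_opt hb hp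

lemma mrev_mix_le {A : Measure ℝ} (hA : IsPriceMech A) (hε0 : 0 ≤ ε) (hε1 : ε ≤ 1)
    [IsFiniteMeasure F] [IsFiniteMeasure D] {m : ℝ} (hF : ∀ p, rev F p ≤ m)
    (hD : ∀ p, rev D p ≤ m) :
    mrev A (mix ε F D) ≤ (1 - ε) * mrev A F + ε * m := by
  have hsplit : mrev A (mix ε F D) = (1 - ε) * mrev A F + ε * mrev A D := by
    simp only [mrev, rev_mix hε0 hε1]
    rw [integral_add ((integrable_rev hA hF).const_mul _) ((integrable_rev hA hD).const_mul _),
      integral_const_mul, integral_const_mul]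
  rw [hsplit]
  gcongr
  exact mrev_le hA hD

end Mix

noncomputable def twoPoint (m a : ℝ) : Measure ℝ :=
  mix (m / a) (Measure.dirac 0) (Measure.dirac a)

lemma meanVarEq_twoPoint {m a : ℝ} (hm : 0 < m) (hma : m ≤ a) :
    MeanVarEq (twoPoint m a) m √(m * (a - m)) := by
  have ha : 0 < a := hm.trans_le hma
  have hw0 : 0 ≤ m / a := by positivity
  have hw1 : m / a ≤ 1 := (div_le_one ha).2 hma
  have hint (f : ℝ → ℝ) : Integrable f (twoPoint m a) :=
    (integrable_dirac (by simp)).mix (integrable_dirac (by simp))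
  have hintegral (f : ℝ → ℝ) : ∫ x, f x ∂(twoPoint m a) = (1 - m / a) * f 0 + m / a * f a := by
    rw [twoPoint, integral_mix hw0 hw1 (integrable_dirac (by simp))
      (integrable_dirac (by simp)), integral_dirac, integral_dirac]
  refine ⟨isProbabilityMeasure_mix hw0 hw1, ?_, hint _, hint _, ?_, ?_⟩
  · simp [twoPoint, mix_apply, ha.le]
  · rw [hintegral]
    field_simp
    ring
  · rw [hintegral, Real.sq_sqrt (mul_nonneg hm.le (sub_nonneg.2 hma))]
    field_simp
    ring

lemma exists_mix_meanVarEq {μ σ ε : ℝ} (hμ : 0 < μ) {F : Measure ℝ} (hF : MeanVarLe F μ σ)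
    (hε0 : 0 < ε) (hε1 : ε < 1) :
    ∃ D : Measure ℝ, (∃ t, MeanVarLe D μ t) ∧ MeanVarEq (mix ε F D) μ σ := by
  have := hF.prob
  set v := ∫ x, (x - μ) ^ 2 ∂F
  have hv0 : 0 ≤ v := integral_nonneg fun x => sq_nonneg _
  have hvσ : v ≤ σ ^ 2 := hF.var_le
  have hgap : 0 ≤ σ ^ 2 - (1 - ε) * v := by nlinarith
  -- `twoPoint μ a` has variance `μ (a - μ)`, so this `a` makes the mixture's variance `σ²`.
  set a := μ + (σ ^ 2 - (1 - ε) * v) / (ε * μ) with ha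
  have hμa : μ ≤ a := le_add_of_nonneg_right (by positivity)
  have hD := meanVarEq_twoPoint hμ hμa
  refine ⟨twoPoint μ a, ⟨_, hD.toMeanVarLe⟩, meanVarEq_mix hε0.le hε1.le hF hD.toMeanVarLe ?_⟩
  rw [hD.var_eq, Real.sq_sqrt (mul_nonneg hμ.le (sub_nonneg.2 hμa)), ha]
  field_simp
  ring

lemma ofReal_div_le_of_forall_mix_le {c b m : ℝ} {S : ℝ≥0∞}
    (h : ∀ ε : ℝ, 0 < ε → ε < 1 →
      ENNReal.ofReal ((1 - ε) * c) / ENNReal.ofReal ((1 - ε) * b + ε * m) ≤ S) :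
    ENNReal.ofReal c / ENNReal.ofReal b ≤ S := by
  rcases eq_or_ne (ENNReal.ofReal c) 0 with hc | hc
  · simp [hc]
  have hlim {f : ℝ → ℝ} (hf : Continuous f) : Tendsto (fun ε => ENNReal.ofReal (f ε))
      (𝓝[>] 0) (𝓝 (ENNReal.ofReal (f 0))) :=
    (ENNReal.continuous_ofReal.comp hf).continuousAt.tendsto.mono_left nhdsWithin_le_nhds
  have hnum := hlim (f := fun ε => (1 - ε) * c) (by fun_prop)
  have hden := hlim (f := fun ε => (1 - ε) * b + ε * m) (by fun_prop)
  simp only [sub_zero, one_mul, zero_mul, add_zero] at hnum hden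
  refine le_of_tendsto (ENNReal.Tendsto.div hnum (Or.inl hc) hden (Or.inl ENNReal.ofReal_ne_top))
    ?_
  filter_upwards [Ioo_mem_nhdsGT one_pos] with ε hε using h ε hε.1 hε.2

lemma iSup_ratio_meanVarLe_eq_iSup_ratio_meanVarEq {μ σ : ℝ} (hμ : 0 < μ) {A : Measure ℝ}
    (hA : IsPriceMech A) :
    (⨆ F : {F : Measure ℝ // MeanVarLe F μ σ},
        ENNReal.ofReal (opt F.1) / ENNReal.ofReal (mrev A F.1)) =
      ⨆ F : {F : Measure ℝ // MeanVarEq F μ σ},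
        ENNReal.ofReal (opt F.1) / ENNReal.ofReal (mrev A F.1) := by
  refine le_antisymm (iSup_le fun ⟨F, hF⟩ => ?_)
    (iSup_le fun ⟨F, hF⟩ => le_iSup_of_le (⟨F, hF.toMeanVarLe⟩ : {F // MeanVarLe F μ σ}) le_rfl)
  refine ofReal_div_le_of_forall_mix_le (m := μ) fun ε hε0 hε1 => ?_
  obtain ⟨D, ⟨t, hD⟩, hG⟩ := exists_mix_meanVarEq hμ hF hε0 hε1
  have := hF.prob
  have := hD.prob
  refine le_iSup_of_le (⟨mix ε F D, hG⟩ : {G // MeanVarEq G μ σ}) ?_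
  exact ENNReal.div_le_div
    (ENNReal.ofReal_le_ofReal (opt_mix_ge hε0.le hε1 hF.rev_le hD.rev_le))
    (ENNReal.ofReal_le_ofReal (mrev_mix_le hA hε0.le hε1.le hF.rev_le hD.rev_le))

theorem stmt12_general (μ σ : ℝ) (hμ : 0 < μ) :
    (∀ A : Measure ℝ, IsPriceMech A →
      (⨆ F : {F : Measure ℝ // MeanVarLe F μ σ},
          ENNReal.ofReal (opt F.1) / ENNReal.ofReal (mrev A F.1)) =
        ⨆ F : {F : Measure ℝ // MeanVarEq F μ σ},
          ENNReal.ofReal (opt F.1) / ENNReal.ofReal (mrev A F.1)) ∧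
    (⨅ A : {A : Measure ℝ // IsPriceMech A},
        ⨆ F : {F : Measure ℝ // MeanVarLe F μ σ},
          ENNReal.ofReal (opt F.1) / ENNReal.ofReal (mrev A.1 F.1)) =
      ⨅ A : {A : Measure ℝ // IsPriceMech A},
        ⨆ F : {F : Measure ℝ // MeanVarEq F μ σ},
          ENNReal.ofReal (opt F.1) / ENNReal.ofReal (mrev A.1 F.1) := by
  exact ⟨fun _ hA => iSup_ratio_meanVarLe_eq_iSup_ratio_meanVarEq hμ hA,
    iInf_congr fun A => iSup_ratio_meanVarLe_eq_iSup_ratio_meanVarEq hμ A.2⟩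

/-- For `μ > 0`, `σ ≥ 0` and any randomized pricing mechanism `A`, the
worst case of `OPT(F)/REV(A;F)` over distributions with mean `μ` and variance `≤ σ²`
equals the worst case over distributions with variance exactly `σ²` (ratios in `ℝ≥0∞`,
so `c/0 = ∞` for `c > 0`); consequently the corresponding inf-sup values coincide. -/
theorem stmt12 (μ σ : ℝ) (hμ : 0 < μ) (hσ : 0 ≤ σ) :
    (∀ A : Measure ℝ, IsPriceMech A →
      (⨆ F : {F : Measure ℝ // MeanVarLe F μ σ},
          ENNReal.ofReal (opt F.1) / ENNReal.ofReal (mrev A F.1)) =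
        ⨆ F : {F : Measure ℝ // MeanVarEq F μ σ},
          ENNReal.ofReal (opt F.1) / ENNReal.ofReal (mrev A F.1)) ∧
    (⨅ A : {A : Measure ℝ // IsPriceMech A},
        ⨆ F : {F : Measure ℝ // MeanVarLe F μ σ},
          ENNReal.ofReal (opt F.1) / ENNReal.ofReal (mrev A.1 F.1)) =
      ⨅ A : {A : Measure ℝ // IsPriceMech A},
        ⨆ F : {F : Measure ℝ // MeanVarEq F μ σ},
          ENNReal.ofReal (opt F.1) / ENNReal.ofReal (mrev A.1 F.1) :=
  stmt12_general μ σ hμ
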